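/- arXiv:1906.04967 — 7 statements merged into one kernel-verified Lean document; each statement's English description precedes it below -/
import Mathlib

section
/- (BCH bound for constacyclic codes) Let C be a λ-constacyclic code of length m over F_q whose defining set contains a consecutive set E = {αξ^{e+zn} : 0 ≤ z ≤ δ-2} with gcd(m,n)=1 and δ ≥ 2. Then every nonzero codeword of C has Hamming weight at least δ. -/
/-!
If `c` has `w` nonzero terms and vanishes at `β γ^z` for `z < w`, its coefficients `c_i β^i`
solve a homogeneous Vandermonde system in the nodes `γ^i`. For the BCH bound take
`β = α ξ^e` and `γ = ξ^n`; since `gcd(m, n) = 1`, `γ` is again a primitive `m`-th root of unity,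
so the nodes `γ^i` with `i < m` are distinct and the system forces `c = 0`.
-/

open Polynomial

theorem Finset.eq_zero_of_forall_sum_mul_pow_eq_zero {R ι : Type*} [CommRing R] [IsDomain R]
    {s : Finset ι} {f v : ι → R} (hf : Set.InjOn f s)
    (hfv : ∀ j < s.card, ∑ i ∈ s, v i * f i ^ j = 0) : ∀ i ∈ s, v i = 0 := by
  let e : Fin s.card ≃ s := s.equivFin.symm
  have hv : (fun k => v (e k)) = 0 := by
    refine Matrix.eq_zero_of_forall_pow_sum_mul_pow_eq_zero (f := fun k => f (e k)) ?_ fun j => ?_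
    · exact fun k l hkl => e.injective (Subtype.ext (hf (e k).2 (e l).2 hkl))
    · rw [e.sum_comp (fun i => v i * f i ^ (j : ℕ)), s.sum_coe_sort (fun i => v i * f i ^ (j : ℕ))]
      exact hfv j j.2
  intro i hi
  simpa [e] using congrFun hv (s.equivFin ⟨i, hi⟩)

theorem Polynomial.lt_card_support_of_aeval_mul_pow_eq_zero {K F : Type*} [CommSemiring K]
    [Field F] [Algebra K F] [FaithfulSMul K F] {c : K[X]} (hc : c ≠ 0) {β γ : F} (hβ : β ≠ 0)
    (hγ : Set.InjOn (γ ^ ·) c.support) {d : ℕ} (hd : ∀ j < d, aeval (β * γ ^ j) c = 0) :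
    d < c.support.card := by
  by_contra! hcard
  have hsystem : ∀ j < c.support.card,
      ∑ i ∈ c.support, (algebraMap K F (c.coeff i) * β ^ i) * (γ ^ i) ^ j = 0 := by
    intro j hj
    rw [← hd j (hj.trans_le hcard), aeval_def, eval₂_eq_sum, sum_def]
    exact Finset.sum_congr rfl fun i _ => by ring
  obtain ⟨i, hi⟩ := nonempty_support_iff.mpr hc
  have := Finset.eq_zero_of_forall_sum_mul_pow_eq_zero hγ hsystem i hi
  simp [hβ, mem_support_iff.mp hi] at this

theorem bch_bound_constacyclic_general
    (K : Type*) [Field K] (m : ℕ) (lam : K) (hlam : lam ≠ 0)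
    (F : Type*) [Field F] [Algebra K F]
    (α ξ : F) (hα : α ^ m = algebraMap K F lam) (hξ : IsPrimitiveRoot ξ m)
    (g : Polynomial K)
    (e n δ : ℕ) (hmn : Nat.gcd m n = 1)
    (hE : ∀ z : ℕ, z ≤ δ - 2 → Polynomial.aeval (α * ξ ^ (e + z * n)) g = 0)
    (c : Polynomial K) (hc : c ≠ 0) (hcdeg : c.degree < m) (hcg : g ∣ c) :
    δ ≤ c.support.card := by
  have hsupp : ∀ i ∈ c.support, i < m := fun i hi => by
    exact_mod_cast (le_degree_of_mem_supp i hi).trans_lt hcdeg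
  have hm : m ≠ 0 := by
    obtain ⟨i, hi⟩ := nonempty_support_iff.mpr hc
    exact Nat.ne_zero_of_lt (hsupp i hi)
  have hα0 : α ≠ 0 := by
    rintro rfl
    exact hlam (by simpa [hm] using hα.symm)
  have hγ : IsPrimitiveRoot (ξ ^ n) m := hξ.pow_of_coprime n (Nat.coprime_comm.mp hmn)
  have hroots : ∀ z < δ - 1, aeval (α * ξ ^ e * (ξ ^ n) ^ z) c = 0 := fun z hz => by
    obtain ⟨q, rfl⟩ := hcg
    rw [map_mul, mul_assoc, ← pow_mul, ← pow_add, mul_comm n, hE z (by omega), zero_mul]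
  have := lt_card_support_of_aeval_mul_pow_eq_zero hc
    (mul_ne_zero hα0 (pow_ne_zero e (hξ.ne_zero hm)))
    (fun i hi j hj hij => hγ.pow_inj (hsupp i hi) (hsupp j hj) hij) hroots
  omega

/-- (BCH bound for constacyclic codes.) If the defining set of a λ-constacyclic code
`C = ⟨g⟩` contains the consecutive set `E = {αξ^{e+zn} : 0 ≤ z ≤ δ-2}` with
`gcd(m,n) = 1` and `δ ≥ 2`, then every nonzero codeword has weight at least `δ`.
A codeword is represented by its polynomial `c` of degree `< m` with `g ∣ c`. -/
theorem bch_bound_constacyclic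
    (K : Type*) [Field K] [Fintype K] (m : ℕ) (hm : 0 < m)
    (hgcd : Nat.gcd m (Fintype.card K) = 1) (lam : K) (hlam : lam ≠ 0)
    (F : Type*) [Field F] [Algebra K F]
    (α ξ : F) (hα : α ^ m = algebraMap K F lam) (hξ : IsPrimitiveRoot ξ m)
    (g : Polynomial K) (hg : g ∣ (X : Polynomial K) ^ m - C lam)
    (e n δ : ℕ) (hn : 0 < n) (hδ : 2 ≤ δ) (hmn : Nat.gcd m n = 1)
    (hE : ∀ z : ℕ, z ≤ δ - 2 → Polynomial.aeval (α * ξ ^ (e + z * n)) g = 0)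
    (c : Polynomial K) (hc : c ≠ 0) (hcdeg : c.degree < m) (hcg : g ∣ c) :
    δ ≤ c.support.card :=
  bch_bound_constacyclic_general K m lam hlam F α ξ hα hξ g e n δ hmn hE c hc hcdeg hcg
end

section
/- (Corollary to Roos bound) If N is a consecutive subset of Ω, M ⊆ Ω is nonempty, and there is a consecutive set M' ⊇ M with |M'| < |M| + |N|, then every λ-constacyclic code whose defining set contains MN = (1/α)⋃_{ε∈M} εN has minimum distance at least |M| + |N|. -/
/-!
Write `N = {ν_z = α ξ^b η^z : z < |N|}` and `M' = {ε_k = α ξ^e γ^k : k < |M'|}` with `η, γ`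
primitive `m`-th roots of unity, and let `w` be the weight of `c`. The values `c(α⁻¹ ε_k ν_z)`
are the entries of `C P`, where `C = (c_j (α ξ^(e+b) γ^k)^j)` is `|M'| × w` and `P = (η^(j z))`
is a `w × |N|` Vandermonde matrix, `j` running over the support of `c`. Since `deg c < m`, the
nodes `γ^j`, resp. `η^j`, are distinct, so `C` and `P` have full rank. The rows of `C P` with
`ε_k ∈ M` vanish. If `|N| > w`, the rows of `P` would be independent and could not annihilate a
nonzero row of `C`; otherwise Sylvester's inequality `rank C + rank P ≤ w + rank (C P)`, with
`rank (C P) ≤ |M'| - |M|`, gives `|M| + |N| ≤ w` or `|M| + |N| ≤ |M'|`, and the latter is excluded.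
-/

open Polynomial

/-- A consecutive subset of `Ω = {αξ^k}`: a set of the form
`{αξ^{e+zn} : 0 ≤ z ≤ δ-2}` with `δ ≥ 2`, `n > 0` and `gcd(m,n) = 1`. -/
def IsConsecutive {F : Type*} [Field F] [DecidableEq F]
    (m : ℕ) (α ξ : F) (E : Finset F) : Prop :=
  ∃ e n δ : ℕ, 0 < n ∧ 2 ≤ δ ∧ Nat.gcd m n = 1 ∧
    E = (Finset.range (δ - 1)).image (fun z => α * ξ ^ (e + z * n))

namespace Matrix

variable {F : Type*} [Field F] {l ι κ ρ : Type*} [Fintype ι] [Fintype κ] [Fintype ρ]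

theorem rank_add_rank_le_card_add_rank_mul (A : Matrix l ι F) (B : Matrix ι κ F) :
    A.rank + B.rank ≤ Fintype.card ι + (A * B).rank := by
  let g := A.mulVecLin.domRestrict (LinearMap.range B.mulVecLin)
  have hrange : LinearMap.range g = LinearMap.range (A * B).mulVecLin := by
    rw [LinearMap.range_domRestrict, mulVecLin_mul, LinearMap.range_comp]
  have hker : Module.finrank F (LinearMap.ker g) ≤
      Module.finrank F (LinearMap.ker A.mulVecLin) := by
    rw [← Submodule.finrank_map_subtype_eq, LinearMap.ker_domRestrict,
      Submodule.map_comap_subtype]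
    exact Submodule.finrank_mono inf_le_right
  have hg := g.finrank_range_add_finrank_ker
  have hA := A.mulVecLin.finrank_range_add_finrank_ker
  rw [hrange] at hg
  rw [Module.finrank_fintype_fun_eq_card] at hA
  rw [rank, rank, rank]
  omega

theorem mulVec_injective_of_rank_eq_card (A : Matrix l ι F) (h : A.rank = Fintype.card ι) :
    Function.Injective A.mulVec := by
  have hA := A.mulVecLin.finrank_range_add_finrank_ker
  rw [Module.finrank_fintype_fun_eq_card, ← rank, h, add_eq_left,
    Submodule.finrank_eq_zero, LinearMap.ker_eq_bot] at hA
  exact hA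

theorem rank_rectVandermonde {v : ι → F} (hv : Function.Injective v) (n : ℕ) :
    (rectVandermonde v 1 n).rank = min (Fintype.card ι) n := by
  refine le_antisymm (le_min (rank_le_card_height _) ?_) ?_
  · simpa using (rectVandermonde v 1 n).rank_le_card_width
  · set k := min (Fintype.card ι) n
    let e : Fin k ↪ ι := (Fin.castLEEmb (min_le_left _ _)).trans
      (Fintype.equivFin ι).symm.toEmbedding
    have hsub : (rectVandermonde v 1 n).submatrix e (Fin.castLE (min_le_right _ _)) =
        vandermonde (v ∘ e) := by
      ext i j
      simp [rectVandermonde_apply]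
    have hdet : (vandermonde (v ∘ e)).det ≠ 0 :=
      det_vandermonde_ne_zero_iff.mpr (hv.comp e.injective)
    calc k = (vandermonde (v ∘ e)).rank := by rw [rank_of_det_ne_zero hdet, Fintype.card_fin]
      _ ≤ (rectVandermonde v 1 n).rank := hsub ▸ rank_submatrix_le _ _ _

theorem card_add_card_le_of_mul_row_eq_zero (C : Matrix κ ι F) (P : Matrix ι ρ F)
    (hC : C.rank = min (Fintype.card κ) (Fintype.card ι))
    (hP : P.rank = min (Fintype.card ι) (Fintype.card ρ))
    (hC0 : ∀ k, C k ≠ 0) (T : Finset κ) (hT : T.Nonempty) (hCP : ∀ k ∈ T, (C * P) k = 0)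
    (hcard : Fintype.card κ < T.card + Fintype.card ρ) :
    T.card + Fintype.card ρ ≤ Fintype.card ι := by
  classical
  have hρι : Fintype.card ρ ≤ Fintype.card ι := by
    by_contra! hlt
    obtain ⟨k, hk⟩ := hT
    have hinj := mulVec_injective_of_rank_eq_card Pᵀ (by rw [rank_transpose, hP]; omega)
    exact hC0 k (hinj (by rw [mulVec_transpose, mulVec_zero]; exact hCP k hk))
  have hsylv := rank_add_rank_le_card_add_rank_mul C P
  have hCPrank : (C * P).rank ≤ Tᶜ.card :=
    rank_le_card_of_support_subset _ _ fun k hk => by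
      simpa using fun hkT => hk (hCP k hkT)
  rw [Finset.card_compl] at hCPrank
  have := T.card_le_univ
  omega

end Matrix

namespace IsPrimitiveRoot

theorem image_range_mul_pow_eq_min {R : Type*} [CommMonoid R] [DecidableEq R] {η : R} {m : ℕ}
    (hη : IsPrimitiveRoot η m) (hm : 0 < m) (a : R) (L : ℕ) :
    (Finset.range L).image (fun z => a * η ^ z) =
      (Finset.range (min L m)).image (fun z => a * η ^ z) := by
  refine le_antisymm (fun x hx => ?_) (Finset.image_subset_image (by simp))
  obtain ⟨z, hz, rfl⟩ := Finset.mem_image.mp hx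
  refine Finset.mem_image.mpr ⟨z % m, ?_, by rw [hη.eq_orderOf, pow_mod_orderOf]⟩
  have := Nat.mod_lt z hm
  have := Nat.mod_le z m
  simp only [Finset.mem_range] at hz ⊢
  omega

theorem card_image_range_mul_pow {R : Type*} [CommMonoidWithZero R] [IsLeftCancelMulZero R]
    [DecidableEq R] {η : R} {m : ℕ} (hη : IsPrimitiveRoot η m) (hm : 0 < m)
    {a : R} (ha : a ≠ 0) (L : ℕ) :
    ((Finset.range L).image (fun z => a * η ^ z)).card = min L m := by
  rw [hη.image_range_mul_pow_eq_min hm, Finset.card_image_of_injOn, Finset.card_range]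
  intro i hi j hj hij
  simp only [Finset.coe_range, Set.mem_Iio, lt_min_iff] at hi hj
  exact hη.pow_inj hi.2 hj.2 (mul_left_cancel₀ ha hij)

theorem injective_pow_support {R K : Type*} [CommMonoid R] [Semiring K]
    {η : R} {m : ℕ} (hη : IsPrimitiveRoot η m) {c : K[X]} (hc : c.degree < m) :
    Function.Injective fun j : c.support => η ^ (j : ℕ) := by
  have hlt : ∀ j : c.support, (j : ℕ) < m := fun j =>
    WithBot.coe_lt_coe.mp ((le_degree_of_mem_supp _ j.2).trans_lt hc)
  exact fun i j hij => Subtype.ext (hη.pow_inj (hlt i) (hlt j) hij)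

end IsPrimitiveRoot

theorem Finset.card_le_card_filter_of_subset_image_range {α : Type*} [DecidableEq α]
    {f : ℕ → α} {n : ℕ} {s : Finset α} (hs : s ⊆ (range n).image f) :
    s.card ≤ (univ.filter fun k : Fin n => f k ∈ s).card := by
  refine (card_le_card fun x hx => ?_).trans (card_image_le (f := fun k : Fin n => f k))
  obtain ⟨k, hk, rfl⟩ := mem_image.mp (hs hx)
  exact mem_image.mpr ⟨⟨k, mem_range.mp hk⟩, by simpa using hx, rfl⟩

theorem IsConsecutive.exists_eq_image_range_card {F : Type*} [Field F] [DecidableEq F]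
    {m : ℕ} {α ξ : F} {E : Finset F} (hE : IsConsecutive m α ξ E) (hm : 0 < m)
    (hξ : IsPrimitiveRoot ξ m) (hα : α ≠ 0) :
    ∃ e η, IsPrimitiveRoot η m ∧ E = (Finset.range E.card).image fun z => α * ξ ^ e * η ^ z := by
  obtain ⟨e, n, δ, -, -, hn, rfl⟩ := hE
  have hη : IsPrimitiveRoot (ξ ^ n) m := hξ.pow_of_coprime n (Nat.coprime_comm.mp hn)
  have ha : α * ξ ^ e ≠ 0 := mul_ne_zero hα (pow_ne_zero _ (hξ.ne_zero hm.ne'))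
  have hprog : (fun z => α * ξ ^ (e + z * n)) = fun z => α * ξ ^ e * (ξ ^ n) ^ z := by
    funext z
    rw [pow_add, mul_assoc, ← pow_mul, mul_comm n]
  refine ⟨e, ξ ^ n, hη, ?_⟩
  rw [hprog, hη.card_image_range_mul_pow hm ha, ← hη.image_range_mul_pow_eq_min hm]

namespace Polynomial

open Matrix

variable {K F κ : Type*}

def termMatrix [CommSemiring K] [CommSemiring F] [Algebra K F] (c : K[X]) (x : κ → F) :
    Matrix κ c.support F :=
  of fun k j => algebraMap K F (c.coeff j) * x k ^ (j : ℕ)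

theorem termMatrix_mul_rectVandermonde [CommSemiring K] [CommRing F] [Algebra K F]
    (c : K[X]) (x : κ → F) (η : F) (t : ℕ) (k : κ) (z : Fin t) :
    (c.termMatrix x * rectVandermonde (fun j : c.support => η ^ (j : ℕ)) 1 t) k z =
      aeval (x k * η ^ (z : ℕ)) c := by
  rw [aeval_def, eval₂_eq_sum, Polynomial.sum_def, ← Finset.sum_coe_sort, mul_apply]
  refine Finset.sum_congr rfl fun j _ => ?_
  simp only [termMatrix, of_apply, rectVandermonde_apply, Pi.one_apply, one_pow,
    mul_one, mul_pow, pow_right_comm η, mul_assoc]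

theorem termMatrix_row_ne_zero [Field K] [Field F] [Algebra K F] {c : K[X]} (hc : c ≠ 0)
    {x : κ → F} {k : κ} (hx : x k ≠ 0) : c.termMatrix x k ≠ 0 := by
  obtain ⟨j, hj⟩ := nonempty_support_iff.mpr hc
  refine fun h => mul_ne_zero ?_ (pow_ne_zero j hx) (congrFun h ⟨j, hj⟩)
  exact (_root_.map_ne_zero _).mpr (mem_support_iff.mp hj)

theorem termMatrix_geom_eq [CommSemiring K] [CommRing F] [Algebra K F] (c : K[X]) (y γ : F)
    (s : ℕ) : c.termMatrix (fun k : Fin s => y * γ ^ (k : ℕ)) =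
      (rectVandermonde (fun j : c.support => γ ^ (j : ℕ)) 1 s)ᵀ *
        diagonal fun j : c.support => algebraMap K F (c.coeff j) * y ^ (j : ℕ) := by
  ext k j
  simp only [termMatrix, of_apply, mul_diagonal, transpose_apply,
    rectVandermonde_apply, Pi.one_apply, one_pow, mul_one, mul_pow, pow_right_comm γ]
  ring

theorem rank_termMatrix_geom [Field K] [Field F] [Algebra K F] (c : K[X]) {y : F} (hy : y ≠ 0)
    {γ : F} (hγ : Function.Injective fun j : c.support => γ ^ (j : ℕ)) (s : ℕ) :
    (c.termMatrix fun k : Fin s => y * γ ^ (k : ℕ)).rank = min s c.support.card := by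
  classical
  have hdiag : (diagonal fun j : c.support =>
      algebraMap K F (c.coeff j) * y ^ (j : ℕ)).det ≠ 0 := by
    rw [det_diagonal, Finset.prod_ne_zero_iff]
    exact fun j _ =>
      mul_ne_zero ((_root_.map_ne_zero _).mpr (mem_support_iff.mp j.2)) (pow_ne_zero _ hy)
  rw [termMatrix_geom_eq, rank_mul_eq_left_of_det_ne_zero _ _ hdiag, rank_transpose,
    rank_rectVandermonde hγ, Fintype.card_coe, min_comm]

end Polynomial

theorem roos_corollary_constacyclic_general
    (K : Type*) [Field K] (m : ℕ) (hm : 0 < m)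
    (lam : K) (hlam : lam ≠ 0)
    (F : Type*) [Field F] [DecidableEq F] [Algebra K F]
    (α ξ : F) (hα : α ^ m = algebraMap K F lam) (hξ : IsPrimitiveRoot ξ m)
    (N M : Finset F)
    (hMne : M.Nonempty)
    (hNcons : IsConsecutive m α ξ N)
    (M' : Finset F) (hM' : IsConsecutive m α ξ M') (hMM' : M ⊆ M')
    (hcard : M'.card < M.card + N.card)
    (MN : Finset F) (hMN : MN = M.biUnion (fun ε => N.image (fun x => α⁻¹ * (ε * x))))
    (g : Polynomial K)
    (hdef : ∀ x ∈ MN, Polynomial.aeval x g = 0)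
    (c : Polynomial K) (hc : c ≠ 0) (hcdeg : c.degree < m) (hcg : g ∣ c) :
    M.card + N.card ≤ c.support.card := by
  have hα0 : α ≠ 0 := by
    rintro rfl
    exact hlam ((map_eq_zero_iff _ (algebraMap K F).injective).mp (by rw [← hα, zero_pow hm.ne']))
  obtain ⟨b, η, hη, hN⟩ := hNcons.exists_eq_image_range_card hm hξ hα0
  obtain ⟨e, γ, hγ, hM'eq⟩ := hM'.exists_eq_image_range_card hm hξ hα0
  set T := Finset.univ.filter fun k : Fin M'.card => α * ξ ^ e * γ ^ (k : ℕ) ∈ M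
  have hMT : M.card ≤ T.card :=
    Finset.card_le_card_filter_of_subset_image_range (hM'eq ▸ hMM')
  have hNmem : ∀ z < N.card, α * ξ ^ b * η ^ z ∈ N := fun z hz => by
    rw [hN]; exact Finset.mem_image_of_mem _ (Finset.mem_range.mpr hz)
  set y := α * ξ ^ e * ξ ^ b
  set C := c.termMatrix fun k : Fin M'.card => y * γ ^ (k : ℕ)
  set P := Matrix.rectVandermonde (fun j : c.support => η ^ (j : ℕ)) 1 N.card
  have hroots : ∀ k ∈ T, (C * P) k = 0 := by
    intro k hk
    ext z
    rw [termMatrix_mul_rectVandermonde]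
    refine aeval_eq_zero_of_dvd_aeval_eq_zero hcg (hdef _ ?_)
    rw [hMN, Finset.mem_biUnion]
    refine ⟨_, (Finset.mem_filter.mp hk).2, Finset.mem_image.mpr ⟨_, hNmem z z.2, ?_⟩⟩
    field_simp
    ring
  have hy : y ≠ 0 := by simp [y, hα0, hξ.ne_zero hm.ne']
  have key := Matrix.card_add_card_le_of_mul_row_eq_zero C P
    (by simpa only [Fintype.card_fin, Fintype.card_coe] using
      rank_termMatrix_geom c hy (hγ.injective_pow_support hcdeg) M'.card)
    (by simpa only [Fintype.card_fin] using
      Matrix.rank_rectVandermonde (hη.injective_pow_support hcdeg) _)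
    (fun k => termMatrix_row_ne_zero hc (mul_ne_zero hy (pow_ne_zero _ (hγ.ne_zero hm.ne'))))
    T (Finset.card_pos.mp (hMne.card_pos.trans_le hMT)) hroots
    (by simp only [Fintype.card_fin]; omega)
  simp only [Fintype.card_fin, Fintype.card_coe] at key
  omega

/-- (Corollary to the Roos bound.) If `N` is a consecutive subset of `Ω`, `M ⊆ Ω` is
nonempty, and there is a consecutive set `M' ⊇ M` with `|M'| < |M| + |N|`, then every
λ-constacyclic code whose defining set contains `MN = (1/α)⋃_{ε∈M} εN` has minimum
distance at least `|M| + |N|`. -/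
theorem roos_corollary_constacyclic
    (K : Type*) [Field K] [Fintype K] (m : ℕ) (hm : 0 < m)
    (hgcd : Nat.gcd m (Fintype.card K) = 1) (lam : K) (hlam : lam ≠ 0)
    (F : Type*) [Field F] [DecidableEq F] [Algebra K F]
    (α ξ : F) (hα : α ^ m = algebraMap K F lam) (hξ : IsPrimitiveRoot ξ m)
    (Omega : Finset F) (hOmega : Omega = (Finset.range m).image (fun k => α * ξ ^ k))
    (N M : Finset F) (hNsub : N ⊆ Omega) (hMsub : M ⊆ Omega)
    (hNne : N.Nonempty) (hMne : M.Nonempty)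
    (hNcons : IsConsecutive m α ξ N)
    (M' : Finset F) (hM' : IsConsecutive m α ξ M') (hMM' : M ⊆ M')
    (hcard : M'.card < M.card + N.card)
    (MN : Finset F) (hMN : MN = M.biUnion (fun ε => N.image (fun x => α⁻¹ * (ε * x))))
    (g : Polynomial K) (hg : g ∣ (X : Polynomial K) ^ m - C lam)
    (hdef : ∀ x ∈ MN, Polynomial.aeval x g = 0)
    (c : Polynomial K) (hc : c ≠ 0) (hcdeg : c.degree < m) (hcg : g ∣ c) :
    M.card + N.card ≤ c.support.card :=
  roos_corollary_constacyclic_general K m hm lam hlam F α ξ hα hξ N M hMne hNcons M' hM' hMM' hcard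
    MN hMN g hdef c hc hcdeg hcg
end

section
/- (Shift bound) Let K be a field, f ∈ K[x] a nonzero polynomial, and S = {θ ∈ K : f(θ) = 0}. Then for every finite subset A of K that is independent with respect to S, the number of nonzero coefficients of f is at least |A|. -/
open Polynomial

/-- Finite subsets of a field `K` that are independent with respect to `S ⊆ K`:
∅ is independent; if `A ⊆ S` is independent and `b ∉ S` then `A ∪ {b}` is independent;
if `A` is independent and `c ≠ 0` then `cA` is independent. -/
inductive IndepFrom {K : Type*} [Field K] [DecidableEq K] (S : Set K) : Finset K → Prop
  | empty : IndepFrom S ∅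
  | insert {A : Finset K} {b : K} (hA : IndepFrom S A) (hAS : ↑A ⊆ S) (hb : b ∉ S) :
      IndepFrom S (insert b A)
  | smul {A : Finset K} {c : K} (hA : IndepFrom S A) (hc : c ≠ 0) :
      IndepFrom S (A.image (fun a => c * a))

/-!
Attach to each `a ∈ K` the vector `(a ^ i)` indexed by the support of `f`; these vectors live in a
space of dimension `wt(f)`, so it suffices that they are linearly independent for `a ∈ A`. This
follows along the inductive definition of independence. Pairing with the coefficients of `f` is a
linear functional sending the vector of `a` to `f(a)`: it kills the span of the vectors of roots but
not the vector of a non-root, which handles adjoining `b ∉ S`. Scaling by `c ≠ 0` multiplies the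
vectors coordinatewise by the invertible vector of `c`.
-/

def powVec {M : Type*} [Monoid M] (I : Finset ℕ) (a : M) : I → M := fun i => a ^ (i : ℕ)

lemma powVec_mul {M : Type*} [CommMonoid M] (I : Finset ℕ) (a b : M) :
    powVec I (a * b) = powVec I a * powVec I b := by
  ext i
  exact mul_pow a b i

lemma linearCombination_coeff_powVec {R : Type*} [CommSemiring R] (f : R[X]) (a : R) :
    Fintype.linearCombination R (fun i : f.support => f.coeff i) (powVec f.support a) =
      f.eval a := by
  rw [Fintype.linearCombination_apply, eval_eq_sum, Polynomial.sum_def,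
    ← Finset.sum_coe_sort f.support]
  exact Finset.sum_congr rfl fun i _ => mul_comm _ _

section Field

variable {K : Type*} [Field K]

lemma powVec_notMem_span_of_eval_ne_zero {f : K[X]} {A : Set K} (hA : ∀ a ∈ A, f.eval a = 0)
    {b : K} (hb : f.eval b ≠ 0) : powVec f.support b ∉ Submodule.span K (powVec f.support '' A) := by
  set φ := Fintype.linearCombination K (fun i : f.support => f.coeff i)
  have hspan : Submodule.span K (powVec f.support '' A) ≤ LinearMap.ker φ := by
    rw [Submodule.span_le]
    rintro _ ⟨a, ha, rfl⟩
    simp only [SetLike.mem_coe, LinearMap.mem_ker, φ, linearCombination_coeff_powVec, hA a ha]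
  intro hmem
  apply hb
  rw [← linearCombination_coeff_powVec]
  exact hspan hmem

lemma LinearIndepOn.powVec_image_mul {I : Finset ℕ} {A : Set K}
    (hA : LinearIndepOn K (powVec I) A) {c : K} (hc : c ≠ 0) :
    LinearIndepOn K (powVec I) ((c * ·) '' A) := by
  have hunit : IsUnit (powVec I c) :=
    Pi.isUnit_iff.mpr fun i => (pow_ne_zero _ hc).isUnit
  have hscale : powVec I ∘ (c * ·) = LinearMap.mulLeft K (powVec I c) ∘ powVec I := by
    ext a i
    simp [powVec_mul]
  apply LinearIndepOn.image_of_comp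
  rw [hscale]
  exact hA.map_injOn _ (hunit.mul_right_injective.injOn)

lemma IndepFrom.linearIndepOn_powVec [DecidableEq K] {f : K[X]} {A : Finset K}
    (hA : IndepFrom {θ : K | f.eval θ = 0} A) : LinearIndepOn K (powVec f.support) (A : Set K) := by
  induction hA with
  | empty => simp
  | insert _ hAS hb ih =>
    rw [Finset.coe_insert]
    exact ih.insert (powVec_notMem_span_of_eval_ne_zero hAS hb)
  | smul _ hc ih =>
    rw [Finset.coe_image]
    exact ih.powVec_image_mul hc

end Field

theorem shift_bound_general {K : Type*} [Field K] [DecidableEq K]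
    (f : Polynomial K)
    (A : Finset K) (hA : IndepFrom {θ : K | Polynomial.eval θ f = 0} A) :
    A.card ≤ f.support.card := by
  simpa using hA.linearIndepOn_powVec.fintype_card_le_finrank

/-- (Shift bound.) If `f ∈ K[x]` is a nonzero polynomial with root set `S`, then
`wt(f) ≥ |A|` for every finite subset `A` of `K` independent with respect to `S`. -/
theorem shift_bound {K : Type*} [Field K] [DecidableEq K]
    (f : Polynomial K) (hf : f ≠ 0)
    (A : Finset K) (hA : IndepFrom {θ : K | Polynomial.eval θ f = 0} A) :
    A.card ≤ f.support.card :=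
  shift_bound_general f A hA
end

section
/- Let C be a λ-quasi-twisted code of index ℓ and length mℓ over F_q with reduced upper-triangular generator matrix G̃(x) having diagonal entries g_{0,0}(x),...,g_{ℓ-1,ℓ-1}(x). Then the F_q-dimension of C equals mℓ - Σ_{j=0}^{ℓ-1} deg g_{j,j}(x). -/
/-!
Write elements of the row space `M` of `G̃` as `c ᵥ* G̃`. Since `f eⱼ ∈ M` for `f = x^m - λ`,
there is `a` with `a ᵥ* G̃ = f eⱼ`; by triangularity `a` vanishes before index `j` and
`aⱼ gⱼⱼ = f`. Subtracting `(cⱼ / aⱼ) • a` from `c` changes `c ᵥ* G̃` by a multiple of `f` and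
leaves `cⱼ mod aⱼ`, so, reducing one index after another, every codeword comes from a `c` with
`deg cⱼ < m - deg gⱼⱼ`. These `c` give distinct codewords: at the first nonzero `cⱼ`,
coordinate `j` of `c ᵥ* G̃` is `cⱼ gⱼⱼ`, nonzero of degree `< m`, hence not divisible by `f`.
So the code is isomorphic to `∏ⱼ K[x]_{< m - deg gⱼⱼ}`.
-/

open Polynomial Module

namespace Polynomial

variable {K : Type*} [Field K] {f g p : K[X]}

theorem degree_mul_lt_of_mem_degreeLT (hf : f ≠ 0) (hg : g ∣ f)
    (hp : p ∈ degreeLT K (f.natDegree - g.natDegree)) : (p * g).degree < f.degree := by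
  rcases eq_or_ne p 0 with rfl | hp₀
  · simpa using bot_lt_iff_ne_bot.mpr (degree_ne_bot.mpr hf)
  have hg₀ : g ≠ 0 := ne_zero_of_dvd_ne_zero hf hg
  have hpdeg : p.natDegree < f.natDegree - g.natDegree :=
    (natDegree_lt_iff_degree_lt hp₀).mpr (mem_degreeLT.mp hp)
  have hgf : g.natDegree ≤ f.natDegree := natDegree_le_of_dvd hg hf
  refine degree_lt_degree ?_
  rw [natDegree_mul hp₀ hg₀]
  omega

end Polynomial

namespace Matrix.IsUpperTriangular

section CommRing

variable {ι R : Type*} [LinearOrder ι] [Fintype ι] [CommRing R] {G : Matrix ι ι R}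
  {c : ι → R} {j : ι}

theorem vecMul_apply_of_forall_lt (hG : G.IsUpperTriangular) (hc : ∀ i < j, c i = 0) :
    (c ᵥ* G) j = c j * G j j := by
  refine Finset.sum_eq_single j (fun i _ hij => ?_) (by simp)
  rcases hij.lt_or_gt with h | h
  · simp [hc i h]
  · simp [hG h]

theorem forall_lt_eq_zero_of_vecMul [NoZeroDivisors R] (hG : G.IsUpperTriangular)
    (hdiag : ∀ i, G i i ≠ 0) (h : ∀ k < j, (c ᵥ* G) k = 0) : ∀ k < j, c k = 0 := by
  intro k
  induction k using WellFoundedLT.induction with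
  | _ k ih =>
    intro hk
    have hck : (c ᵥ* G) k = c k * G k k :=
      hG.vecMul_apply_of_forall_lt fun i hi => ih i hi (hi.trans hk)
    exact (mul_eq_zero.mp (hck ▸ h k hk)).resolve_right (hdiag k)

theorem exists_vecMul_eq_smul_single [NoZeroDivisors R] [DecidableEq ι]
    (hG : G.IsUpperTriangular) (hdiag : ∀ i, G i i ≠ 0) {f : R}
    (hf : f • Pi.single j 1 ∈ Submodule.span R (Set.range G)) :
    ∃ a : ι → R, a ᵥ* G = f • Pi.single j 1 ∧ (∀ i < j, a i = 0) ∧ a j * G j j = f := by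
  obtain ⟨a, ha⟩ := (Submodule.mem_span_range_iff_exists_fun R).mp hf
  rw [← vecMul_eq_sum] at ha
  have ha₀ : ∀ i < j, a i = 0 := hG.forall_lt_eq_zero_of_vecMul hdiag fun k hk => by
    simp [ha, Pi.single_eq_of_ne hk.ne]
  refine ⟨a, ha, ha₀, ?_⟩
  rw [← hG.vecMul_apply_of_forall_lt ha₀, ha]
  simp

end CommRing

section PolynomialEntries

variable {ι K : Type*} [LinearOrder ι] [Fintype ι] [Field K] {G : Matrix ι ι K[X]} {f : K[X]}

theorem eq_zero_of_dvd_vecMul (hG : G.IsUpperTriangular) (hf : f ≠ 0) (hdiv : ∀ i, G i i ∣ f)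
    {c : ι → K[X]} (hc : ∀ i, c i ∈ degreeLT K (f.natDegree - (G i i).natDegree))
    (hdvd : ∀ k, f ∣ (c ᵥ* G) k) : c = 0 := by
  funext k
  induction k using WellFoundedLT.induction with
  | _ k ih =>
    have hk : f ∣ c k * G k k := hG.vecMul_apply_of_forall_lt ih ▸ hdvd k
    have hk₀ := eq_zero_of_dvd_of_degree_lt hk (degree_mul_lt_of_mem_degreeLT hf (hdiv k) (hc k))
    exact (mul_eq_zero.mp hk₀).resolve_right (ne_zero_of_dvd_ne_zero hf (hdiv k))

theorem exists_reduce_at [DecidableEq ι] {j : ι} {a : ι → K[X]}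
    (ha : a ᵥ* G = f • Pi.single j 1) (haj : a j ≠ 0) (ha₀ : ∀ i < j, a i = 0) (c : ι → K[X]) :
    ∃ c' : ι → K[X], (∀ i < j, c' i = c i) ∧ (c' j).degree < (a j).degree ∧
      ∀ k, f ∣ (c ᵥ* G - c' ᵥ* G) k := by
  refine ⟨c - (c j / a j) • a, fun i hi => by simp [ha₀ i hi], ?_, fun k => ?_⟩
  · simpa [EuclideanDomain.mod_eq_sub_mul_div, mul_comm] using degree_mod_lt (c j) haj
  · rw [← sub_vecMul, sub_sub_cancel, smul_vecMul, ha]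
    simp only [Pi.smul_apply, smul_eq_mul]
    exact dvd_mul_of_dvd_right (dvd_mul_right _ _) _

end PolynomialEntries

section FinIndex

variable {K : Type*} [Field K] {ℓ : ℕ} {G : Matrix (Fin ℓ) (Fin ℓ) K[X]} {f : K[X]}

theorem exists_reduced_vecMul (hG : G.IsUpperTriangular) (hf : f ≠ 0) (hdiv : ∀ i, G i i ∣ f)
    (hM : ∀ j, f • Pi.single j 1 ∈ Submodule.span K[X] (Set.range G)) (c : Fin ℓ → K[X]) :
    ∃ c' : Fin ℓ → K[X], (∀ i, c' i ∈ degreeLT K (f.natDegree - (G i i).natDegree)) ∧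
      ∀ k, f ∣ (c ᵥ* G - c' ᵥ* G) k := by
  have hdiag : ∀ i, G i i ≠ 0 := fun i => ne_zero_of_dvd_ne_zero hf (hdiv i)
  suffices ∀ n : ℕ, ∃ c' : Fin ℓ → K[X],
      (∀ i : Fin ℓ, (i : ℕ) < n → c' i ∈ degreeLT K (f.natDegree - (G i i).natDegree)) ∧
      ∀ k, f ∣ (c ᵥ* G - c' ᵥ* G) k by
    obtain ⟨c', hc', hdvd⟩ := this ℓ
    exact ⟨c', fun i => hc' i i.isLt, hdvd⟩
  intro n
  induction n with
  | zero => exact ⟨c, by simp, by simp⟩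
  | succ n ih =>
    obtain ⟨c₁, hc₁, hdvd₁⟩ := ih
    by_cases hn : n < ℓ
    swap
    · exact ⟨c₁, fun i _ => hc₁ i (by omega), hdvd₁⟩
    set j : Fin ℓ := ⟨n, hn⟩
    obtain ⟨a, ha, ha₀, haj⟩ := hG.exists_vecMul_eq_smul_single hdiag (hM j)
    have haj₀ : a j ≠ 0 := left_ne_zero_of_mul (haj ▸ hf)
    have hadeg : (a j).natDegree = f.natDegree - (G j j).natDegree := by
      rw [← haj, natDegree_mul haj₀ (hdiag j)]
      omega
    obtain ⟨c₂, hc₂, hc₂j, hdvd₂⟩ := exists_reduce_at ha haj₀ ha₀ c₁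
    refine ⟨c₂, fun i hi => ?_, fun k => ?_⟩
    · rcases Nat.lt_succ_iff_lt_or_eq.mp hi with hi | hi
      · exact hc₂ i hi ▸ hc₁ i hi
      · obtain rfl : i = j := Fin.ext hi
        rw [mem_degreeLT, ← hadeg, ← degree_eq_natDegree haj₀]
        exact hc₂j
    · simpa using dvd_add (hdvd₁ k) (hdvd₂ k)

theorem finrank_map_span_rows {V : Type*} [AddCommGroup V] [Module K V]
    (hG : G.IsUpperTriangular) (hf : f ≠ 0) (hdiv : ∀ i, G i i ∣ f)
    (hM : ∀ j, f • Pi.single j 1 ∈ Submodule.span K[X] (Set.range G))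
    (Φ : (Fin ℓ → K[X]) →ₗ[K] V) (hΦ : ∀ v, Φ v = 0 ↔ ∀ k, f ∣ v k) :
    finrank K (((Submodule.span K[X] (Set.range G)).restrictScalars K).map Φ) =
      ∑ j, (f.natDegree - (G j j).natDegree) := by
  set D : Fin ℓ → Submodule K K[X] := fun j => degreeLT K (f.natDegree - (G j j).natDegree)
  let ψ : (Π j, D j) →ₗ[K] V := Φ ∘ₗ (G.vecMulLinear.restrictScalars K) ∘ₗ
    LinearMap.pi fun j => (D j).subtype ∘ₗ LinearMap.proj j
  have hψ : ∀ p, ψ p = Φ ((fun j => (p j : K[X])) ᵥ* G) := fun p => rfl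
  have hinj : Function.Injective ψ := by
    refine (injective_iff_map_eq_zero ψ).mpr fun p hp => funext fun j => Subtype.ext ?_
    rw [hψ, hΦ] at hp
    exact congrFun (hG.eq_zero_of_dvd_vecMul hf hdiv (fun i => (p i).2) hp) j
  have hrange : ((Submodule.span K[X] (Set.range G)).restrictScalars K).map Φ =
      LinearMap.range ψ := by
    apply le_antisymm
    · rintro _ ⟨v, hv, rfl⟩
      obtain ⟨c, rfl⟩ := (Submodule.mem_span_range_iff_exists_fun K[X]).mp hv
      obtain ⟨c', hc', hdvd⟩ := hG.exists_reduced_vecMul hf hdiv hM c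
      refine ⟨fun j => ⟨c' j, hc' j⟩, ?_⟩
      rw [hψ, ← vecMul_eq_sum, eq_comm, ← sub_eq_zero, ← map_sub]
      exact (hΦ _).mpr hdvd
    · rintro _ ⟨p, rfl⟩
      exact ⟨_, (Submodule.mem_span_range_iff_exists_fun K[X]).mpr ⟨_, (vecMul_eq_sum _ _).symm⟩,
        (hψ p).symm⟩
  rw [hrange, LinearMap.finrank_range_of_inj hinj, finrank_pi_fintype]
  simp [D, finrank_eq_card_basis (degreeLT.basis K _)]

end FinIndex

end Matrix.IsUpperTriangular

theorem qt_code_dimension_general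
    (K : Type*) [Field K] (m ℓ : ℕ) (hm : 0 < m)
    (lam : K)
    (I : Ideal (Polynomial K)) (hI : I = Ideal.span {(X : Polynomial K) ^ m - C lam})
    (G : Matrix (Fin ℓ) (Fin ℓ) (Polynomial K))
    (hupper : ∀ i j : Fin ℓ, j < i → G i j = 0)
    (hdiv : ∀ j : Fin ℓ, G j j ∣ (X : Polynomial K) ^ m - C lam)
    (M : Submodule (Polynomial K) (Fin ℓ → Polynomial K))
    (hM : M = Submodule.span (Polynomial K) (Set.range (fun i : Fin ℓ => G i)))
    (hMe : ∀ j : Fin ℓ,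
      (((X : Polynomial K) ^ m - C lam) • (Pi.single j 1 : Fin ℓ → Polynomial K)) ∈ M)
    (Φ : (Fin ℓ → Polynomial K) →ₗ[K] (Fin ℓ → Polynomial K ⧸ I))
    (hΦ : Φ = LinearMap.pi (fun j : Fin ℓ =>
      (Ideal.Quotient.mkₐ K I).toLinearMap.comp
        (LinearMap.proj j : (Fin ℓ → Polynomial K) →ₗ[K] Polynomial K)))
    (Code : Submodule K (Fin ℓ → Polynomial K ⧸ I))
    (hCode : Code = Submodule.map Φ (M.restrictScalars K)) :
    Module.finrank K Code = m * ℓ - ∑ j : Fin ℓ, (G j j).natDegree := by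
  subst hM hCode
  have hf : (X : K[X]) ^ m - C lam ≠ 0 := X_pow_sub_C_ne_zero hm lam
  have hker : ∀ v, Φ v = 0 ↔ ∀ k, X ^ m - C lam ∣ v k := by
    simp [hΦ, hI, funext_iff, Ideal.Quotient.eq_zero_iff_mem, Ideal.mem_span_singleton]
  rw [Matrix.IsUpperTriangular.finrank_map_span_rows (fun i j h => hupper i j h) hf hdiv hMe Φ
      hker, Finset.sum_tsub_distrib _ fun j _ => natDegree_le_of_dvd (hdiv j) hf,
    natDegree_X_pow_sub_C]
  simp [mul_comm]

/-- (Dimension of a QT code.) Let `C` be the λ-quasi-twisted code of index `ℓ` obtained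
as the image in `R^ℓ = (K[x]/(x^m-λ))^ℓ` of the `K[x]`-submodule `M ⊆ K[x]^ℓ` generated
by the rows of the reduced upper-triangular matrix `G̃(x)` with diagonal entries
`g_{j,j}(x)`. Then `dim_K C = mℓ - Σ_j deg g_{j,j}(x)`. -/
theorem qt_code_dimension
    (K : Type*) [Field K] [Fintype K] (m ℓ : ℕ) (hm : 0 < m) (hℓ : 0 < ℓ)
    (hgcd : Nat.gcd m (Fintype.card K) = 1) (lam : K) (hlam : lam ≠ 0)
    (I : Ideal (Polynomial K)) (hI : I = Ideal.span {(X : Polynomial K) ^ m - C lam})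
    (G : Matrix (Fin ℓ) (Fin ℓ) (Polynomial K))
    (hupper : ∀ i j : Fin ℓ, j < i → G i j = 0)
    (hdiv : ∀ j : Fin ℓ, G j j ∣ (X : Polynomial K) ^ m - C lam)
    (hdeg : ∀ i j : Fin ℓ, i < j → (G i j).degree < (G j j).degree)
    (hfull : ∀ i j : Fin ℓ, i ≠ j → G j j = (X : Polynomial K) ^ m - C lam → G i j = 0)
    (M : Submodule (Polynomial K) (Fin ℓ → Polynomial K))
    (hM : M = Submodule.span (Polynomial K) (Set.range (fun i : Fin ℓ => G i)))
    (hMe : ∀ j : Fin ℓ,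
      (((X : Polynomial K) ^ m - C lam) • (Pi.single j 1 : Fin ℓ → Polynomial K)) ∈ M)
    (Φ : (Fin ℓ → Polynomial K) →ₗ[K] (Fin ℓ → Polynomial K ⧸ I))
    (hΦ : Φ = LinearMap.pi (fun j : Fin ℓ =>
      (Ideal.Quotient.mkₐ K I).toLinearMap.comp
        (LinearMap.proj j : (Fin ℓ → Polynomial K) →ₗ[K] Polynomial K)))
    (Code : Submodule K (Fin ℓ → Polynomial K ⧸ I))
    (hCode : Code = Submodule.map Φ (M.restrictScalars K)) :
    Module.finrank K Code = m * ℓ - ∑ j : Fin ℓ, (G j j).natDegree :=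
  qt_code_dimension_general K m ℓ hm lam I hI G hupper hdiv M hM hMe Φ hΦ Code hCode
end

section
/- Let C be a λ-QT code of index ℓ with eigenvalues β_1,...,β_t having eigenspaces of dimensions n_1,...,n_t. Form H_i = (1, β_i, ..., β_i^{m-1}) ⊗ V_i, where the rows of V_i are a basis of the eigenspace of β_i, and stack the H_i into the matrix H. Then H has rank mℓ - dim_{F_q}(C). -/
/-!
By the Smith normal form over `K[X]`, `G = U * diagonal a * S` with `U`, `S` unimodular, and
`a j ∣ X^m - λ` because the row module of `G` contains `(X^m - λ) K[X]^ℓ`. Three counts follow: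
the code has codimension `∑ deg a_j` in `(K[X]/(X^m - λ))^ℓ`; the eigenspace of `β_i` has
dimension `#{j | a_j(β_i) = 0}`; and since `X^m - λ` is separable (`gcd(m, q) = 1`) and splits
in `F`, each `a_j` has exactly `deg a_j` roots, all of them eigenvalues. Double counting gives
`∑ n_i = ∑ deg a_j`. The rows of `H` are independent since the `β_i` are at most `m` distinct
roots of `X^m - λ` (Vandermonde), so `rank H = ∑ n_i`.
-/

open Polynomial

section SpanRows

variable {R ι : Type*} [CommSemiring R] [Fintype ι]

theorem Submodule.smul_mem_of_forall_smul_single_mem [DecidableEq ι] {N : Submodule R (ι → R)}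
    {f : R} (hN : ∀ j, f • (Pi.single j 1 : ι → R) ∈ N) (v : ι → R) : f • v ∈ N := by
  have hv : f • v = ∑ j, v j • f • (Pi.single j 1 : ι → R) := by
    ext k
    simp [Finset.sum_apply, Pi.single_apply, mul_comm]
  rw [hv]
  exact N.sum_mem fun j _ => N.smul_mem _ (hN j)

theorem Matrix.exists_eq_mul_of_forall_mem_span_rows (A B : Matrix ι ι R)
    (h : ∀ i, A i ∈ Submodule.span R (Set.range B)) : ∃ C : Matrix ι ι R, A = C * B := by
  choose C hC using fun i => (Submodule.mem_span_range_iff_exists_fun R).mp (h i)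
  refine ⟨Matrix.of C, Matrix.ext fun i k => ?_⟩
  simp [Matrix.mul_apply, ← hC i, Finset.sum_apply]

end SpanRows

section SmithForm

variable {R ι : Type*} [CommRing R] [IsDomain R] [Fintype ι] [DecidableEq ι]

theorem Matrix.exists_isUnit_det_eq_mul_of_span_rows_eq {A B : Matrix ι ι R}
    (h : Submodule.span R (Set.range A) = Submodule.span R (Set.range B)) (hB : B.det ≠ 0) :
    ∃ U : Matrix ι ι R, IsUnit U.det ∧ A = U * B := by
  obtain ⟨C, rfl⟩ := A.exists_eq_mul_of_forall_mem_span_rows B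
    fun i => h ▸ Submodule.subset_span ⟨i, rfl⟩
  obtain ⟨D, hD⟩ := B.exists_eq_mul_of_forall_mem_span_rows (C * B)
    fun i => h.symm ▸ Submodule.subset_span ⟨i, rfl⟩
  have hCD : C.det * D.det = 1 := by
    apply mul_right_cancel₀ hB
    conv_rhs => rw [one_mul, hD]
    rw [Matrix.det_mul, Matrix.det_mul, mul_comm C.det, mul_assoc]
  exact ⟨C, .of_mul_eq_one _ hCD, rfl⟩

variable [IsPrincipalIdealRing R]

theorem Submodule.finrank_eq_of_forall_smul_single_mem {N : Submodule R (ι → R)} {f : R}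
    (hf : f ≠ 0) (hN : ∀ j, f • (Pi.single j 1 : ι → R) ∈ N) :
    Module.finrank R N = Module.finrank R (ι → R) := by
  refine le_antisymm (Submodule.finrank_le N) ?_
  have hinj : Function.Injective (f • LinearMap.id : (ι → R) →ₗ[R] ι → R) :=
    smul_right_injective _ hf
  calc Module.finrank R (ι → R) = Module.finrank R (LinearMap.range (f • LinearMap.id)) :=
        (LinearMap.finrank_range_of_inj hinj).symm
    _ ≤ Module.finrank R N := by
        refine Submodule.finrank_mono ?_
        rintro _ ⟨v, rfl⟩
        exact N.smul_mem_of_forall_smul_single_mem hN v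

theorem Matrix.exists_eq_mul_diagonal_smithNormalFormCoeffs (G : Matrix ι ι R)
    (h : Module.finrank R (Submodule.span R (Set.range G)) = Module.finrank R (ι → R)) :
    ∃ U S : Matrix ι ι R, IsUnit U.det ∧ IsUnit S.det ∧
      G = U * Matrix.diagonal (Submodule.smithNormalFormCoeffs (Pi.basisFun R ι) h) * S := by
  set a := Submodule.smithNormalFormCoeffs (Pi.basisFun R ι) h
  set b := Submodule.smithNormalFormTopBasis (Pi.basisFun R ι) h
  set ab := Submodule.smithNormalFormBotBasis (Pi.basisFun R ι) h
  set S : Matrix ι ι R := Matrix.of fun i => b i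
  have hS : IsUnit S.det := by
    have hT : S = ((Pi.basisFun R ι).toMatrix b).transpose := by
      ext i j
      simp [S, Module.Basis.toMatrix_apply]
    rw [hT, Matrix.det_transpose]
    exact Matrix.isUnit_det_of_right_inverse ((Pi.basisFun R ι).toMatrix_mul_toMatrix_flip b)
  have hrows : Set.range (Matrix.diagonal a * S) = Set.range fun i => (ab i : ι → R) := by
    congr 1
    ext i k
    simp [ab, a, S, b, Matrix.diagonal_mul]
  have hspan : Submodule.span R (Set.range G)
      = Submodule.span R (Set.range (Matrix.diagonal a * S)) := by
    rw [hrows, show (Set.range fun i => (ab i : ι → R))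
        = (Submodule.span R (Set.range G)).subtype '' Set.range ab from Set.range_comp _ _,
      Submodule.span_image, ab.span_eq, Submodule.map_top, Submodule.range_subtype]
  have hdet : (Matrix.diagonal a * S).det ≠ 0 := by
    rw [Matrix.det_mul, Matrix.det_diagonal]
    exact mul_ne_zero (Finset.prod_ne_zero_iff.mpr fun i _ =>
      Submodule.smithNormalFormCoeffs_ne_zero _ h i) hS.ne_zero
  obtain ⟨U, hU, hG⟩ := Matrix.exists_isUnit_det_eq_mul_of_span_rows_eq hspan hdet
  exact ⟨U, S, hU, hS, by rw [hG, Matrix.mul_assoc]⟩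

omit [DecidableEq ι] in
theorem Submodule.smithNormalFormCoeffs_dvd_of_forall_smul_mem {M : Type*} [AddCommGroup M]
    [Module R M] {N : Submodule R M} (b : Module.Basis ι R M)
    (h : Module.finrank R N = Module.finrank R M) {f : R} (hf : ∀ x, f • x ∈ N) (i : ι) :
    Submodule.smithNormalFormCoeffs b h i ∣ f := by
  set b' := Submodule.smithNormalFormTopBasis b h
  obtain ⟨c, hc⟩ := (Submodule.smithNormalFormBotBasis b h).mem_submodule_iff'.mp (hf (b' i))
  simp_rw [Submodule.smithNormalFormBotBasis_def, smul_smul] at hc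
  have := congr($(congrArg b'.repr hc) i)
  rw [b'.repr_sum_self, map_smul, b'.repr_self] at this
  exact ⟨c i, by simpa [mul_comm] using this⟩

end SmithForm

theorem Submodule.finrank_quotient_map_of_ker_le {K V W : Type*} [Ring K] [AddCommGroup V]
    [Module K V] [AddCommGroup W] [Module K W] {Φ : V →ₗ[K] W} (hΦ : Function.Surjective Φ)
    {N : Submodule K V} (hN : LinearMap.ker Φ ≤ N) :
    Module.finrank K (W ⧸ N.map Φ) = Module.finrank K (V ⧸ N) := by
  set ψ := (N.map Φ).mkQ ∘ₗ Φ
  have hker : LinearMap.ker ψ = N := by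
    rw [LinearMap.ker_comp, Submodule.ker_mkQ, Submodule.comap_map_eq, sup_eq_left.mpr hN]
  exact ((Submodule.quotEquivOfEq _ _ hker.symm).trans
    (ψ.quotKerEquivOfSurjective ((N.map Φ).mkQ_surjective.comp hΦ))).finrank_eq.symm

section PolynomialQuotient

variable {K : Type*} [Field K] {ι : Type*} [Fintype ι]

theorem Submodule.finrank_quotient_eq_sum_natDegree {M : Type*} [AddCommGroup M] [Module K M]
    [Module K[X] M] [IsScalarTower K K[X] M] {N : Submodule K[X] M} (b : Module.Basis ι K[X] M)
    (h : Module.finrank K[X] N = Module.finrank K[X] M) :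
    Module.finrank K (M ⧸ N.restrictScalars K)
      = ∑ i, (Submodule.smithNormalFormCoeffs b h i).natDegree := by
  have (i : ι) : Module.Finite K (K[X] ⧸ Ideal.span {Submodule.smithNormalFormCoeffs b h i}) :=
    (AdjoinRoot.powerBasis (Submodule.smithNormalFormCoeffs_ne_zero b h i)).finite
  rw [(Submodule.Quotient.restrictScalarsEquiv K N).finrank_eq,
    Submodule.finrank_quotient_eq_sum K b h]
  simp only [finrank_quotient_span_eq_natDegree]

theorem finrank_map_quotient_span_add_finrank_quotient {f : K[X]} (hf : f ≠ 0)
    {N : Submodule K[X] (ι → K[X])} (hN : ∀ v, f • v ∈ N) :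
    Module.finrank K ((N.restrictScalars K).map (LinearMap.pi fun j : ι =>
        (Ideal.Quotient.mkₐ K (Ideal.span {f})).toLinearMap.comp (LinearMap.proj j)))
      + Module.finrank K ((ι → K[X]) ⧸ N.restrictScalars K) = Fintype.card ι * f.natDegree := by
  set Φ : (ι → K[X]) →ₗ[K] (ι → K[X] ⧸ Ideal.span {f}) := LinearMap.pi fun j : ι =>
        (Ideal.Quotient.mkₐ K (Ideal.span {f})).toLinearMap.comp (LinearMap.proj j)
  have hΦ : Function.Surjective Φ := fun y => by
    choose x hx using fun j => Ideal.Quotient.mk_surjective (y j)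
    exact ⟨x, funext hx⟩
  have hker : LinearMap.ker Φ ≤ N.restrictScalars K := by
    intro v hv
    have hdvd : ∀ j, f ∣ v j := fun j => Ideal.mem_span_singleton.mp
      (Ideal.Quotient.eq_zero_iff_mem.mp (congrFun hv j))
    choose w hw using hdvd
    exact (funext hw : v = f • w) ▸ hN w
  have : Module.Finite K (K[X] ⧸ Ideal.span {f}) := (AdjoinRoot.powerBasis hf).finite
  rw [← Submodule.finrank_quotient_map_of_ker_le hΦ hker, add_comm,
    Submodule.finrank_quotient_add_finrank, Module.finrank_pi_fintype]
  simp [finrank_quotient_span_eq_natDegree]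

end PolynomialQuotient

namespace Matrix

variable {R F ι : Type*} [CommRing R] [Field F] [DecidableEq F] [Fintype ι] [DecidableEq ι]
  {G U S : Matrix ι ι R} {a : ι → R}

omit [DecidableEq F] in
theorem map_det_eq_zero_iff_of_eq_mul_diagonal_mul (hG : G = U * diagonal a * S)
    (hU : IsUnit U.det) (hS : IsUnit S.det) (φ : R →+* F) :
    φ G.det = 0 ↔ ∃ j, φ (a j) = 0 := by
  rw [hG, det_mul, det_mul, det_diagonal, map_mul, map_mul, map_prod,
    mul_eq_zero, mul_eq_zero, Finset.prod_eq_zero_iff]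
  simp [(hU.map φ).ne_zero, (hS.map φ).ne_zero]

theorem finrank_ker_toLin'_map_of_eq_mul_diagonal_mul (hG : G = U * diagonal a * S)
    (hU : IsUnit U.det) (hS : IsUnit S.det) (φ : R →+* F) :
    Module.finrank F (LinearMap.ker (toLin' (G.map φ))) = Fintype.card {j // φ (a j) = 0} := by
  have hrank : (G.map φ).rank = Fintype.card {j // φ (a j) ≠ 0} := by
    rw [hG, Matrix.map_mul, Matrix.map_mul, diagonal_map (map_zero φ),
      rank_mul_eq_left_of_isUnit_det _ _ (by simpa [RingHom.map_det] using hS.map φ),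
      rank_mul_eq_right_of_isUnit_det _ _ (by simpa [RingHom.map_det] using hU.map φ),
      rank_diagonal]
  have hnullity := LinearMap.finrank_range_add_finrank_ker (toLin' (G.map φ))
  rw [toLin'_apply', ← rank, hrank, Module.finrank_fintype_fun_eq_card,
    Fintype.card_subtype_compl] at hnullity
  have := Fintype.card_subtype_le fun j => φ (a j) = 0
  rw [toLin'_apply']
  omega

end Matrix

namespace Polynomial

variable {K F κ : Type*} [Field K] [Field F] [Algebra K F] [Fintype κ] {β : κ → F}

theorem card_le_natDegree_of_injective_of_aeval_eq_zero {p : K[X]} (hp : p ≠ 0)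
    (hβ : Function.Injective β) (hroot : ∀ i, aeval (β i) p = 0) :
    Fintype.card κ ≤ p.natDegree := by
  classical
  calc Fintype.card κ ≤ Fintype.card (p.rootSet F) :=
        Fintype.card_le_of_injective (fun i => ⟨β i, (mem_rootSet.mpr ⟨hp, hroot i⟩)⟩)
          fun i j hij => hβ (congrArg Subtype.val hij)
    _ ≤ p.natDegree := by
        simp_rw [rootSet_def, Finset.coe_sort_coe, Fintype.card_coe]
        exact (Multiset.toFinset_card_le _).trans ((card_roots' _).trans natDegree_map_le)

theorem card_aeval_eq_zero_eq_natDegree [DecidableEq F] {p : K[X]} (hsep : p.Separable)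
    (hsplit : Splits (p.map (algebraMap K F))) (hβ : Function.Injective β)
    (hroots : ∀ x, aeval x p = 0 → ∃ i, x = β i) :
    Fintype.card {i // aeval (β i) p = 0} = p.natDegree := by
  rw [← card_rootSet_eq_natDegree hsep hsplit]
  refine Fintype.card_of_bijective (f := fun i => ⟨β i, mem_rootSet.mpr ⟨hsep.ne_zero, i.2⟩⟩)
    ⟨fun i j hij => Subtype.ext (hβ (congrArg Subtype.val hij)), fun x => ?_⟩
  obtain ⟨i, hi⟩ := hroots x (mem_rootSet.mp x.2).2
  exact ⟨⟨i, hi ▸ (mem_rootSet.mp x.2).2⟩, Subtype.ext hi.symm⟩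

end Polynomial

theorem FiniteField.natCast_ne_zero_of_coprime_card {K : Type*} [Field K] [Fintype K] {m : ℕ}
    (h : Nat.Coprime m (Fintype.card K)) : (m : K) ≠ 0 := by
  intro hm
  have hm' := (ringChar.spec K m).mp hm
  have hq := (ringChar.spec K _).mp (FiniteField.cast_card_eq_zero K)
  exact CharP.ringChar_ne_one (Nat.eq_one_of_dvd_coprimes h hm' hq)

theorem linearIndependent_sigma_pow_mul {F ι : Type*} [Field F] {t m : ℕ} {β : Fin t → F}
    (hβ : Function.Injective β) (htm : t ≤ m) {κ : Fin t → Type*} [∀ i, Fintype (κ i)]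
    {V : (i : Fin t) → κ i → ι → F} (hV : ∀ i, LinearIndependent F (V i)) :
    LinearIndependent F fun p : Σ i, κ i =>
      fun q : Fin m × ι => β p.1 ^ (q.1 : ℕ) * V p.1 p.2 q.2 := by
  rw [Fintype.linearIndependent_iff]
  intro c hc
  set w : (i : Fin t) → ι → F := fun i => ∑ r, c ⟨i, r⟩ • V i r
  have hw : ∀ j, (fun i => w i j) = 0 := by
    intro j
    refine Matrix.eq_zero_of_forall_pow_sum_mul_pow_eq_zero hβ fun k => ?_
    have := congrFun hc (Fin.castLE htm k, j)
    simp only [Finset.sum_apply, Pi.smul_apply, smul_eq_mul, Pi.zero_apply] at this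
    rw [← this, ← Finset.univ_sigma_univ, Finset.sum_sigma]
    refine Finset.sum_congr rfl fun i _ => ?_
    simp only [w, Finset.sum_apply, Pi.smul_apply, smul_eq_mul, Finset.sum_mul, Fin.val_castLE]
    exact Finset.sum_congr rfl fun r _ => by ring
  rintro ⟨i, r⟩
  exact Fintype.linearIndependent_iff.mp (hV i) (fun r => c ⟨i, r⟩)
    (funext fun j => congrFun (hw j) i) r

theorem Fintype.sum_card_subtype_comm {α β : Type*} [Fintype α] [Fintype β] (r : α → β → Prop)
    [∀ a b, Decidable (r a b)] :
    ∑ a, Fintype.card {b // r a b} = ∑ b, Fintype.card {a // r a b} := by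
  simpa only [Fintype.card_subtype, Finset.bipartiteAbove, Finset.bipartiteBelow] using
    Finset.sum_card_bipartiteAbove_eq_sum_card_bipartiteBelow (s := Finset.univ)
      (t := Finset.univ) r

theorem spectral_parity_check_rank_general
    (K : Type*) [Field K] [Fintype K] (m ℓ : ℕ)
    (hgcd : Nat.gcd m (Fintype.card K) = 1) (lam : K) (hlam : lam ≠ 0)
    (F : Type*) [Field F] [Algebra K F]
    (hsplit : Polynomial.Splits (((X : Polynomial K) ^ m - C lam).map (algebraMap K F)))
    (I : Ideal (Polynomial K)) (hI : I = Ideal.span {(X : Polynomial K) ^ m - C lam})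
    (G : Matrix (Fin ℓ) (Fin ℓ) (Polynomial K))
    (M : Submodule (Polynomial K) (Fin ℓ → Polynomial K))
    (hM : M = Submodule.span (Polynomial K) (Set.range (fun i : Fin ℓ => G i)))
    (hMe : ∀ j : Fin ℓ,
      (((X : Polynomial K) ^ m - C lam) • (Pi.single j 1 : Fin ℓ → Polynomial K)) ∈ M)
    (Φ : (Fin ℓ → Polynomial K) →ₗ[K] (Fin ℓ → Polynomial K ⧸ I))
    (hΦ : Φ = LinearMap.pi (fun j : Fin ℓ =>
      (Ideal.Quotient.mkₐ K I).toLinearMap.comp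
        (LinearMap.proj j : (Fin ℓ → Polynomial K) →ₗ[K] Polynomial K)))
    (Code : Submodule K (Fin ℓ → Polynomial K ⧸ I))
    (hCode : Code = Submodule.map Φ (M.restrictScalars K))
    -- the eigenvalues β_1, …, β_t and their eigenspaces
    (t : ℕ) (β : Fin t → F) (hβinj : Function.Injective β)
    (hβroot : ∀ i : Fin t, Polynomial.aeval (β i) G.det = 0)
    (hβall : ∀ x : F, Polynomial.aeval x G.det = 0 → ∃ i : Fin t, x = β i)
    (n : Fin t → ℕ) (V : (i : Fin t) → Matrix (Fin (n i)) (Fin ℓ) F)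
    (hVli : ∀ i : Fin t, LinearIndependent F (fun r : Fin (n i) => V i r))
    (hVspan : ∀ i : Fin t, Submodule.span F (Set.range (fun r : Fin (n i) => V i r))
      = LinearMap.ker (Matrix.toLin' (G.map (fun p => Polynomial.aeval (β i) p))))
    (H : Matrix ((i : Fin t) × Fin (n i)) (Fin m × Fin ℓ) F)
    (hH : H = fun p q => β p.1 ^ (q.1 : ℕ) * V p.1 p.2 q.2) :
    H.rank = m * ℓ - Module.finrank K Code := by
  classical
  subst hI hM hΦ hCode hH
  set f : K[X] := X ^ m - C lam
  have hsep : f.Separable :=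
    separable_X_pow_sub_C lam (FiniteField.natCast_ne_zero_of_coprime_card hgcd) hlam
  have hfM := Submodule.smul_mem_of_forall_smul_single_mem hMe
  have hrank := Submodule.finrank_eq_of_forall_smul_single_mem hsep.ne_zero hMe
  have hcode := finrank_map_quotient_span_add_finrank_quotient hsep.ne_zero hfM
  rw [Submodule.finrank_quotient_eq_sum_natDegree (Pi.basisFun _ _) hrank, Fintype.card_fin,
    natDegree_X_pow_sub_C] at hcode
  set a := Submodule.smithNormalFormCoeffs (Pi.basisFun K[X] (Fin ℓ)) hrank
  have ha (j : Fin ℓ) : a j ∣ f :=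
    Submodule.smithNormalFormCoeffs_dvd_of_forall_smul_mem _ hrank hfM j
  obtain ⟨U, S, hU, hS, hG⟩ := G.exists_eq_mul_diagonal_smithNormalFormCoeffs hrank
  have hroots (x : F) : aeval x G.det = 0 ↔ ∃ j, aeval x (a j) = 0 :=
    Matrix.map_det_eq_zero_iff_of_eq_mul_diagonal_mul hG hU hS (aeval x).toRingHom
  have hn (i : Fin t) : n i = Fintype.card {j // aeval (β i) (a j) = 0} := by
    rw [← Fintype.card_fin (n i), ← finrank_span_eq_card (hVli i), hVspan i]
    exact Matrix.finrank_ker_toLin'_map_of_eq_mul_diagonal_mul hG hU hS (aeval (β i)).toRingHom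
  have hcard (j : Fin ℓ) : Fintype.card {i // aeval (β i) (a j) = 0} = (a j).natDegree :=
    card_aeval_eq_zero_eq_natDegree (hsep.of_dvd (ha j))
      (hsplit.of_dvd (Polynomial.map_ne_zero hsep.ne_zero) (Polynomial.map_dvd _ (ha j))) hβinj
      fun x hx => hβall x ((hroots x).mpr ⟨j, hx⟩)
  have hβf (i : Fin t) : aeval (β i) f = 0 := by
    obtain ⟨j, hj⟩ := (hroots (β i)).mp (hβroot i)
    obtain ⟨c, hc⟩ := ha j
    rw [hc, map_mul, hj, zero_mul]
  have htm : t ≤ m := by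
    simpa only [Fintype.card_fin, f, natDegree_X_pow_sub_C] using
      card_le_natDegree_of_injective_of_aeval_eq_zero hsep.ne_zero hβinj hβf
  rw [(linearIndependent_sigma_pow_mul hβinj htm hVli).rank_matrix, Fintype.card_sigma]
  simp only [Fintype.card_fin, hn, Fintype.sum_card_subtype_comm, hcard]
  rw [mul_comm m ℓ]
  omega

/-- (Rank of the spectral parity-check matrix.) Let `C` be a λ-QT code of index `ℓ` with
eigenvalues `β_1, …, β_t` (the roots of `det G̃(x)` in the splitting field `F`) whose
eigenspaces (null spaces of `G̃(β_i)`) have dimensions `n_i` and basis matrices `V_i`.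
Stacking the blocks `H_i = (1, β_i, …, β_i^{m-1}) ⊗ V_i` into `H`, the matrix `H` has
rank `mℓ - dim_K C`. -/
theorem spectral_parity_check_rank
    (K : Type*) [Field K] [Fintype K] (m ℓ : ℕ) (hm : 0 < m) (hℓ : 0 < ℓ)
    (hgcd : Nat.gcd m (Fintype.card K) = 1) (lam : K) (hlam : lam ≠ 0)
    (F : Type*) [Field F] [Algebra K F]
    (hsplit : Polynomial.Splits (((X : Polynomial K) ^ m - C lam).map (algebraMap K F)))
    (I : Ideal (Polynomial K)) (hI : I = Ideal.span {(X : Polynomial K) ^ m - C lam})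
    (G : Matrix (Fin ℓ) (Fin ℓ) (Polynomial K))
    (hupper : ∀ i j : Fin ℓ, j < i → G i j = 0)
    (hdiv : ∀ j : Fin ℓ, G j j ∣ (X : Polynomial K) ^ m - C lam)
    (hdeg : ∀ i j : Fin ℓ, i < j → (G i j).degree < (G j j).degree)
    (hfull : ∀ i j : Fin ℓ, i ≠ j → G j j = (X : Polynomial K) ^ m - C lam → G i j = 0)
    (M : Submodule (Polynomial K) (Fin ℓ → Polynomial K))
    (hM : M = Submodule.span (Polynomial K) (Set.range (fun i : Fin ℓ => G i)))
    (hMe : ∀ j : Fin ℓ,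
      (((X : Polynomial K) ^ m - C lam) • (Pi.single j 1 : Fin ℓ → Polynomial K)) ∈ M)
    (Φ : (Fin ℓ → Polynomial K) →ₗ[K] (Fin ℓ → Polynomial K ⧸ I))
    (hΦ : Φ = LinearMap.pi (fun j : Fin ℓ =>
      (Ideal.Quotient.mkₐ K I).toLinearMap.comp
        (LinearMap.proj j : (Fin ℓ → Polynomial K) →ₗ[K] Polynomial K)))
    (Code : Submodule K (Fin ℓ → Polynomial K ⧸ I))
    (hCode : Code = Submodule.map Φ (M.restrictScalars K))
    -- the eigenvalues β_1, …, β_t and their eigenspaces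
    (t : ℕ) (β : Fin t → F) (hβinj : Function.Injective β)
    (hβroot : ∀ i : Fin t, Polynomial.aeval (β i) G.det = 0)
    (hβall : ∀ x : F, Polynomial.aeval x G.det = 0 → ∃ i : Fin t, x = β i)
    (n : Fin t → ℕ) (V : (i : Fin t) → Matrix (Fin (n i)) (Fin ℓ) F)
    (hVli : ∀ i : Fin t, LinearIndependent F (fun r : Fin (n i) => V i r))
    (hVspan : ∀ i : Fin t, Submodule.span F (Set.range (fun r : Fin (n i) => V i r))
      = LinearMap.ker (Matrix.toLin' (G.map (fun p => Polynomial.aeval (β i) p))))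
    (H : Matrix ((i : Fin t) × Fin (n i)) (Fin m × Fin ℓ) F)
    (hH : H = fun p q => β p.1 ^ (q.1 : ℕ) * V p.1 p.2 q.2) :
    H.rank = m * ℓ - Module.finrank K Code :=
  spectral_parity_check_rank_general K m ℓ hgcd lam hlam F hsplit I hI G M hM hMe Φ hΦ Code hCode t
    β hβinj hβroot hβall n V hVli hVspan H hH
end

section
/- Key step of the spectral bound: if c is a nonzero codeword of the λ-QT code C with weight ω < d(ℂ_P), where ℂ_P is the eigencode of the common eigenspace V_P of P, then for every nonzero row c_k of the m×ℓ array of c, the syndrome s_k = V_P c_k^T is nonzero, and the number of nonzero syndromes s_k satisfies 0 < #{k : s_k ≠ 0} ≤ ω. -/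
open Polynomial

/-- The minimum distance (in `ℕ∞`, so `⊤` for the zero code) of a code given as a set
of vectors: the least Hamming weight of a nonzero element. -/
noncomputable def setMinDist {ι : Type*} [Fintype ι] {K : Type*} [DecidableEq K] [Zero K]
    (Code : Set (ι → K)) : ℕ∞ :=
  sInf {w : ℕ∞ | ∃ u ∈ Code, u ≠ 0 ∧
    w = ((Finset.univ.filter fun j : ι => u j ≠ 0).card : ℕ∞)}

/-! A nonzero row `c_k` with zero syndrome is orthogonal to every row of `V_P`, hence to all of
`V_P`, so it is a nonzero word of the eigencode of weight at most `ω < d(ℂ_P)`, which is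
impossible. A nonzero syndrome needs a nonzero row, and `c` has at most `ω` nonzero rows. -/

open Matrix

theorem setMinDist_le {ι K : Type*} [Fintype ι] [DecidableEq K] [Zero K]
    {S : Set (ι → K)} {u : ι → K} (hu : u ∈ S) (hu0 : u ≠ 0) :
    setMinDist S ≤ ((Finset.univ.filter fun j => u j ≠ 0).card : ℕ∞) :=
  sInf_le ⟨u, hu, hu0, rfl⟩

section Weight

variable {ι κ R : Type*} [Fintype ι] [Fintype κ] [DecidableEq R] [Zero R]

theorem card_filter_row_ne_zero_le (c : ι → κ → R) (i : ι) :
    (Finset.univ.filter fun j => c i j ≠ 0).card ≤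
      (Finset.univ.filter fun q : ι × κ => c q.1 q.2 ≠ 0).card :=
  Finset.card_le_card_of_injOn (Prod.mk i) (fun j hj => by simpa using hj)
    (Prod.mk_right_injective i).injOn

theorem card_filter_ne_zero_rows_le (c : ι → κ → R) :
    (Finset.univ.filter fun i => c i ≠ 0).card ≤
      (Finset.univ.filter fun q : ι × κ => c q.1 q.2 ≠ 0).card := by
  refine Finset.card_le_card_of_surjOn Prod.fst fun i hi => ?_
  obtain ⟨j, hj⟩ := Function.ne_iff.mp (Finset.mem_filter.mp hi).2
  exact ⟨(i, j), by simpa using hj, rfl⟩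

end Weight

theorem Matrix.dotProduct_eq_zero_of_mem_span_rows {ι n R : Type*} [Fintype n]
    [CommSemiring R] {A : Matrix ι n R} {w v : n → R} (hw : A *ᵥ w = 0)
    (hv : v ∈ Submodule.span R (Set.range A)) : v ⬝ᵥ w = 0 := by
  induction hv using Submodule.span_induction with
  | mem x hx => obtain ⟨i, rfl⟩ := hx; exact congrFun hw i
  | zero => exact zero_dotProduct w
  | add x y _ _ hx hy => rw [add_dotProduct, hx, hy, add_zero]
  | smul a x _ hx => rw [smul_dotProduct, hx, smul_zero]

theorem qt_spectral_bound_key_step_general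
    (K : Type*) [Field K] [DecidableEq K]
    (m ℓ : ℕ)
    (F : Type*) [Field F] [DecidableEq F] [Algebra K F]
    -- the common eigenspace V_P, with basis the rows of the matrix VPmat
    (VP : Submodule F (Fin ℓ → F))
    (t : ℕ) (VPmat : Matrix (Fin t) (Fin ℓ) F)
    (hVspan : Submodule.span F (Set.range (fun r : Fin t => VPmat r)) = VP)
    -- the eigencode ℂ_P of V_P
    (ECode : Set (Fin ℓ → K))
    (hECode : ECode = {u : Fin ℓ → K |
      ∀ v ∈ VP, ∑ j : Fin ℓ, v j * algebraMap K F (u j) = 0})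
    -- c is a nonzero codeword of weight ω < d(ℂ_P)
    (c : Fin m → Fin ℓ → K)
    (hcne : c ≠ 0)
    (ω : ℕ) (hω : ω = (Finset.univ.filter fun q : Fin m × Fin ℓ => c q.1 q.2 ≠ 0).card)
    (hωlt : (ω : ℕ∞) < setMinDist ECode) :
    (∀ k : Fin m, c k ≠ 0 →
        VPmat.mulVec (fun j : Fin ℓ => algebraMap K F (c k j)) ≠ 0) ∧
      0 < (Finset.univ.filter fun k : Fin m =>
            VPmat.mulVec (fun j : Fin ℓ => algebraMap K F (c k j)) ≠ 0).card ∧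
      (Finset.univ.filter fun k : Fin m =>
            VPmat.mulVec (fun j : Fin ℓ => algebraMap K F (c k j)) ≠ 0).card ≤ ω := by
  set syndrome : Fin m → Fin t → F := fun k => VPmat *ᵥ fun j => algebraMap K F (c k j)
  have hsyndrome : ∀ k, c k ≠ 0 → syndrome k ≠ 0 := by
    intro k hk hzero
    have hmem : c k ∈ ECode := by
      rw [hECode]
      intro v hv
      exact dotProduct_eq_zero_of_mem_span_rows hzero (hVspan ▸ hv)
    have hle : setMinDist ECode ≤ ω :=
      (setMinDist_le hmem hk).trans (Nat.cast_le.mpr (hω ▸ card_filter_row_ne_zero_le c k))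
    exact hle.not_gt hωlt
  refine ⟨hsyndrome, ?_, ?_⟩
  · obtain ⟨k, hk⟩ := Function.ne_iff.mp hcne
    exact Finset.card_pos.mpr ⟨k, by simpa using hsyndrome k hk⟩
  · have hsub : (Finset.univ.filter fun k => syndrome k ≠ 0) ⊆
        Finset.univ.filter fun k => c k ≠ 0 := by
      intro k
      simp only [Finset.mem_filter, Finset.mem_univ, true_and]
      intro hk hck
      refine hk ?_
      simp only [syndrome, hck, Pi.zero_apply, map_zero]
      exact mulVec_zero VPmat
    exact hω ▸ (Finset.card_le_card hsub).trans (card_filter_ne_zero_rows_le c)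

/-- (Key step of the spectral bound.) If `c` is a nonzero codeword of the λ-QT code `C`
with weight `ω < d(ℂ_P)`, where `ℂ_P` is the eigencode of the common eigenspace `V_P`
of `P` (with basis the rows of the matrix `V_P`), then every nonzero row `c_k` of the
`m×ℓ` array of `c` has nonzero syndrome `s_k = V_P c_k^T`, and
`0 < #{k : s_k ≠ 0} ≤ ω`. -/
theorem qt_spectral_bound_key_step
    (K : Type*) [Field K] [Fintype K] [DecidableEq K]
    (m ℓ : ℕ) (hm : 0 < m) (hℓ : 0 < ℓ)
    (hgcd : Nat.gcd m (Fintype.card K) = 1) (lam : K) (hlam : lam ≠ 0)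
    (F : Type*) [Field F] [DecidableEq F] [Algebra K F]
    (hsplit : Polynomial.Splits (((X : Polynomial K) ^ m - C lam).map (algebraMap K F)))
    (α ξ : F) (hα : α ^ m = algebraMap K F lam) (hξ : IsPrimitiveRoot ξ m)
    (Omega : Finset F) (hOmega : Omega = (Finset.range m).image (fun k => α * ξ ^ k))
    (I : Ideal (Polynomial K)) (hI : I = Ideal.span {(X : Polynomial K) ^ m - C lam})
    (G : Matrix (Fin ℓ) (Fin ℓ) (Polynomial K))
    (hupper : ∀ i j : Fin ℓ, j < i → G i j = 0)
    (hdiv : ∀ j : Fin ℓ, G j j ∣ (X : Polynomial K) ^ m - C lam)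
    (hdeg : ∀ i j : Fin ℓ, i < j → (G i j).degree < (G j j).degree)
    (hfull : ∀ i j : Fin ℓ, i ≠ j → G j j = (X : Polynomial K) ^ m - C lam → G i j = 0)
    (M : Submodule (Polynomial K) (Fin ℓ → Polynomial K))
    (hM : M = Submodule.span (Polynomial K) (Set.range (fun i : Fin ℓ => G i)))
    (hMe : ∀ j : Fin ℓ,
      (((X : Polynomial K) ^ m - C lam) • (Pi.single j 1 : Fin ℓ → Polynomial K)) ∈ M)
    (Φ : (Fin ℓ → Polynomial K) →ₗ[K] (Fin ℓ → Polynomial K ⧸ I))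
    (hΦ : Φ = LinearMap.pi (fun j : Fin ℓ =>
      (Ideal.Quotient.mkₐ K I).toLinearMap.comp
        (LinearMap.proj j : (Fin ℓ → Polynomial K) →ₗ[K] Polynomial K)))
    (Code : Submodule K (Fin ℓ → Polynomial K ⧸ I))
    (hCode : Code = Submodule.map Φ (M.restrictScalars K))
    -- the eigenvalue set of the code
    (EV : Set F) (hEV : EV = {x : F | Polynomial.aeval x G.det = 0})
    -- P is a nonempty subset of the eigenvalues
    (P : Finset F) (hPne : P.Nonempty) (hPsub : ↑P ⊆ EV)
    -- the common eigenspace V_P, with basis the rows of the matrix VPmat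
    (VP : Submodule F (Fin ℓ → F))
    (hVP : VP = ⨅ x ∈ P, LinearMap.ker (Matrix.toLin'
      (G.map (fun p => Polynomial.aeval x p))))
    (t : ℕ) (VPmat : Matrix (Fin t) (Fin ℓ) F)
    (hVli : LinearIndependent F (fun r : Fin t => VPmat r))
    (hVspan : Submodule.span F (Set.range (fun r : Fin t => VPmat r)) = VP)
    -- the eigencode ℂ_P of V_P
    (ECode : Set (Fin ℓ → K))
    (hECode : ECode = {u : Fin ℓ → K |
      ∀ v ∈ VP, ∑ j : Fin ℓ, v j * algebraMap K F (u j) = 0})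
    -- c is a nonzero codeword of weight ω < d(ℂ_P)
    (c : Fin m → Fin ℓ → K)
    (hc : (fun j : Fin ℓ =>
      Ideal.Quotient.mk I (∑ k : Fin m, C (c k j) * X ^ (k : ℕ))) ∈ Code)
    (hcne : c ≠ 0)
    (ω : ℕ) (hω : ω = (Finset.univ.filter fun q : Fin m × Fin ℓ => c q.1 q.2 ≠ 0).card)
    (hωlt : (ω : ℕ∞) < setMinDist ECode) :
    (∀ k : Fin m, c k ≠ 0 →
        VPmat.mulVec (fun j : Fin ℓ => algebraMap K F (c k j)) ≠ 0) ∧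
      0 < (Finset.univ.filter fun k : Fin m =>
            VPmat.mulVec (fun j : Fin ℓ => algebraMap K F (c k j)) ≠ 0).card ∧
      (Finset.univ.filter fun k : Fin m =>
            VPmat.mulVec (fun j : Fin ℓ => algebraMap K F (c k j)) ≠ 0).card ≤ ω :=
  qt_spectral_bound_key_step_general K m ℓ F VP t VPmat hVspan ECode hECode c hcne ω hω hωlt
end

section
/- Every nonzero element of the preimage C̃ ⊆ F_q[x]^ℓ of a λ-QT code, with respect to the reduced upper-triangular basis G̃(x), has the form (0,...,0,c_j(x),...,c_{ℓ-1}(x)) where c_j(x) ≠ 0 and g_{j,j}(x) divides c_j(x). -/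
open Polynomial

namespace Matrix

variable {ι R : Type*} [LinearOrder ι] [Fintype ι] [CommSemiring R]

theorem BlockTriangular.vecMul_apply_of_forall_lt_eq_zero {G : Matrix ι ι R}
    (hG : G.BlockTriangular id) {a : ι → R} {k : ι} (ha : ∀ i < k, a i = 0) :
    (a ᵥ* G) k = a k * G k k := by
  refine Finset.sum_eq_single k (fun i _ hik => ?_) (by simp)
  rcases hik.lt_or_gt with hik | hki
  · rw [ha i hik, zero_mul]
  · exact mul_eq_zero_of_right _ (hG hki)

/-- Taking `j` the first index with `a j ≠ 0`, triangularity makes `(a ᵥ* G)` vanish before `j`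
and equal `a j * G j j` at `j`. -/
theorem BlockTriangular.exists_first_ne_zero_dvd_diag_of_mem_span_rows [NoZeroDivisors R]
    {G : Matrix ι ι R} (hG : G.BlockTriangular id) (hdiag : ∀ j, G j j ≠ 0)
    {c : ι → R} (hc : c ∈ Submodule.span R (Set.range G)) (hc0 : c ≠ 0) :
    ∃ j, (∀ i < j, c i = 0) ∧ c j ≠ 0 ∧ G j j ∣ c j := by
  obtain ⟨a, rfl⟩ : ∃ a, a ᵥ* G = c := by
    simpa only [vecMul_eq_sum] using (Submodule.mem_span_range_iff_exists_fun R).mp hc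
  obtain ⟨j, hj⟩ := exists_minimal_of_wellFoundedLT (fun i => a i ≠ 0)
    (Function.ne_iff.mp fun ha => hc0 (ha ▸ zero_vecMul G))
  have ha : ∀ i < j, a i = 0 := fun i hi => not_not.mp ((minimal_iff_forall_lt.mp hj).2 hi)
  have hcj : (a ᵥ* G) j = a j * G j j := hG.vecMul_apply_of_forall_lt_eq_zero ha
  refine ⟨j, fun i hi => ?_, hcj ▸ mul_ne_zero hj.prop (hdiag j), hcj ▸ dvd_mul_left _ _⟩
  rw [hG.vecMul_apply_of_forall_lt_eq_zero fun k hk => ha k (hk.trans hi), ha i hi, zero_mul]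

end Matrix

theorem qt_preimage_element_shape_general
    (K : Type*) [Field K] (m ℓ : ℕ) (hm : 0 < m)
    (lam : K)
    (G : Matrix (Fin ℓ) (Fin ℓ) (Polynomial K))
    (hupper : ∀ i j : Fin ℓ, j < i → G i j = 0)
    (hdiv : ∀ j : Fin ℓ, G j j ∣ (X : Polynomial K) ^ m - C lam)
    (M : Submodule (Polynomial K) (Fin ℓ → Polynomial K))
    (hM : M = Submodule.span (Polynomial K) (Set.range (fun i : Fin ℓ => G i)))
    (c : Fin ℓ → Polynomial K) (hc : c ∈ M) (hcne : c ≠ 0) :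
    ∃ j : Fin ℓ, (∀ i : Fin ℓ, i < j → c i = 0) ∧ c j ≠ 0 ∧ G j j ∣ c j := by
  have hdiag : ∀ j, G j j ≠ 0 := fun j hj =>
    (monic_X_pow_sub_C lam hm.ne').ne_zero (zero_dvd_iff.mp (hj ▸ hdiv j))
  subst hM
  exact Matrix.BlockTriangular.exists_first_ne_zero_dvd_diag_of_mem_span_rows
    (fun i j h => hupper i j h) hdiag hc hcne

/-- Every nonzero element of the preimage `C̃ ⊆ K[x]^ℓ` of a λ-QT code, with respect to
the reduced upper-triangular basis `G̃(x)`, has the form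
`(0, …, 0, c_j(x), …, c_{ℓ-1}(x))` where `c_j(x) ≠ 0` and `g_{j,j}(x) ∣ c_j(x)`. -/
theorem qt_preimage_element_shape
    (K : Type*) [Field K] [Fintype K] (m ℓ : ℕ) (hm : 0 < m) (hℓ : 0 < ℓ)
    (hgcd : Nat.gcd m (Fintype.card K) = 1) (lam : K) (hlam : lam ≠ 0)
    (G : Matrix (Fin ℓ) (Fin ℓ) (Polynomial K))
    (hupper : ∀ i j : Fin ℓ, j < i → G i j = 0)
    (hdiv : ∀ j : Fin ℓ, G j j ∣ (X : Polynomial K) ^ m - C lam)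
    (hdeg : ∀ i j : Fin ℓ, i < j → (G i j).degree < (G j j).degree)
    (hfull : ∀ i j : Fin ℓ, i ≠ j → G j j = (X : Polynomial K) ^ m - C lam → G i j = 0)
    (M : Submodule (Polynomial K) (Fin ℓ → Polynomial K))
    (hM : M = Submodule.span (Polynomial K) (Set.range (fun i : Fin ℓ => G i)))
    (hMe : ∀ j : Fin ℓ,
      (((X : Polynomial K) ^ m - C lam) • (Pi.single j 1 : Fin ℓ → Polynomial K)) ∈ M)
    (c : Fin ℓ → Polynomial K) (hc : c ∈ M) (hcne : c ≠ 0) :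
    ∃ j : Fin ℓ, (∀ i : Fin ℓ, i < j → c i = 0) ∧ c j ≠ 0 ∧ G j j ∣ c j :=
  qt_preimage_element_shape_general K m ℓ hm lam G hupper hdiv M hM c hc hcne
end
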